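/- arXiv:2203.14848 — 2 statements merged into one kernel-verified Lean document; each statement's English description precedes it below -/
import Mathlib

section
/- (Proposition on the sign of the coefficient, Region I.) Let α ∈ (0,1), β > 0, and let k⋆ > 0 be the unique positive root of 𝒟(k) = (α + βk²)·sinh(k) − k·cosh(k). Then 𝒟(2k⋆) ≠ 0, and the coefficient m̃₂₁⁽²⁾ = −(9αβ + 16)k⋆ + 12αβk⋆·cosh(2k⋆) − 3αβk⋆·cosh(4k⋆) + 8α(2c(k⋆) − 1)·sinh(2k⋆) + 4α(c(k⋆) + 2)·sinh(4k⋆), with c(k⋆) = −1 − k⋆(cosh(2k⋆) + 2)/𝒟(2k⋆), is strictly negative. -/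
/-- The linear dispersion function `𝒟(k) = (α + βk²)·sinh(k) − k·cosh(k)`. -/
noncomputable def disp (α β k : ℝ) : ℝ :=
  (α + β * k ^ 2) * Real.sinh k - k * Real.cosh k

/-!
Write `s = sinh k⋆`, `h = cosh k⋆`. The dispersion relation gives `β k⋆² s = k⋆ h − α s`, which
turns `𝒟(2k⋆)` into `2E` with `E = k⋆(2s² + 3) − 3αsh`; `E > 0` because
`3 sinh x cosh x ≤ x (2 sinh² x + 3)` and `α < 1`. Eliminating `β` and `c` the same way,
`k⋆ · E · m̃₂₁⁽²⁾` becomes `8 N(α, k⋆, s, h)` for an explicit polynomial `N`, and `N < 0`: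
for `s ≤ 1` because `s ≤ k⋆ h` and `α² ≤ α`, for `s ≥ 1` by AM-GM between its `α` and `α³` terms.
-/

open Real

lemma le_of_hasDerivAt_nonneg {f f' : ℝ → ℝ} (hf : ∀ t, HasDerivAt f (f' t) t)
    (hf' : ∀ t, 0 < t → 0 ≤ f' t) {x : ℝ} (hx : 0 ≤ x) : f 0 ≤ f x :=
  monotoneOn_of_hasDerivWithinAt_nonneg (convex_Ici 0)
    (fun t _ => (hf t).continuousAt.continuousWithinAt) (fun t _ => (hf t).hasDerivWithinAt)
    (fun t ht => hf' t (by simpa using ht)) Set.self_mem_Ici hx hx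

lemma Real.sinh_le_mul_cosh {x : ℝ} (hx : 0 ≤ x) : sinh x ≤ x * cosh x := by
  have hderiv (t : ℝ) : HasDerivAt (fun u => u * cosh u - sinh u) (t * sinh t) t := by
    refine (((hasDerivAt_id t).mul (hasDerivAt_cosh t)).sub (hasDerivAt_sinh t)).congr_deriv ?_
    simp
  have := le_of_hasDerivAt_nonneg hderiv (fun t ht => (mul_pos ht (sinh_pos_iff.2 ht)).le) hx
  simpa using this

lemma Real.three_mul_sinh_mul_cosh_le {x : ℝ} (hx : 0 ≤ x) :
    3 * sinh x * cosh x ≤ x * (2 * sinh x ^ 2 + 3) := by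
  have hderiv (t : ℝ) : HasDerivAt (fun u => u * (2 * sinh u ^ 2 + 3) - 3 * sinh u * cosh u)
      (4 * sinh t * (t * cosh t - sinh t)) t := by
    refine (((hasDerivAt_id t).mul ((((hasDerivAt_sinh t).pow 2).const_mul 2).add_const 3)).sub
      (((hasDerivAt_sinh t).const_mul 3).mul (hasDerivAt_cosh t))).congr_deriv ?_
    simp only [id_eq, Nat.cast_ofNat, Pi.pow_apply]
    linear_combination -3 * cosh_sq t
  have := le_of_hasDerivAt_nonneg hderiv (fun t ht => mul_nonneg
    (by positivity [sinh_pos_iff.2 ht]) (sub_nonneg.2 (sinh_le_mul_cosh ht.le))) hx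
  simpa using this

-- `k⋆ · 𝒟(2k⋆)/2 · m̃₂₁⁽²⁾ / 8`, with `s = sinh k⋆`, `h = cosh k⋆`, once `β` and `c` are eliminated.
def m21Numerator (α k s h : ℝ) : ℝ :=
  -α * k ^ 2 * s * h * (2 * s ^ 4 + 17 * s ^ 2 + 15) + 3 * α ^ 2 * k * s ^ 2 * (s ^ 4 + 6 * s ^ 2 + 4)
    - 9 * α ^ 3 * s ^ 5 * h - 2 * k ^ 3 * (2 * s ^ 2 + 3)

lemma m21Numerator_neg_of_sq_le_one {α k s h : ℝ} (hα0 : 0 < α) (hα1 : α < 1) (hk : 0 < k)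
    (hs : 0 < s) (hh : 0 < h) (hsk : s ≤ k * h) (hs1 : s ^ 2 ≤ 1) :
    m21Numerator α k s h < 0 := by
  have hα2 : α ^ 2 ≤ α := by nlinarith
  have hpoly : 3 * (s ^ 4 + 6 * s ^ 2 + 4) ≤ 2 * s ^ 4 + 17 * s ^ 2 + 15 := by nlinarith
  calc m21Numerator α k s h
      ≤ -α * k * s * s * (2 * s ^ 4 + 17 * s ^ 2 + 15) + 3 * α * k * s ^ 2 * (s ^ 4 + 6 * s ^ 2 + 4)
        - 2 * k ^ 3 * (2 * s ^ 2 + 3) := by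
        unfold m21Numerator
        have : α * k * s * s * (2 * s ^ 4 + 17 * s ^ 2 + 15)
            ≤ α * k * s * (k * h) * (2 * s ^ 4 + 17 * s ^ 2 + 15) := by gcongr
        have : α ^ 2 * (k * s ^ 2 * (s ^ 4 + 6 * s ^ 2 + 4))
            ≤ α * (k * s ^ 2 * (s ^ 4 + 6 * s ^ 2 + 4)) := by gcongr
        have : 0 ≤ 9 * α ^ 3 * s ^ 5 * h := by positivity
        linarith
    _ < 0 := by nlinarith [mul_pos (mul_pos hα0 hk) (pow_pos hs 2), pow_pos hk 3]

lemma m21Numerator_neg_of_one_le_sq {α k s h : ℝ} (hα0 : 0 < α) (hk : 0 < k) (hs : 0 < s)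
    (hh : 0 < h) (hpy : h ^ 2 = s ^ 2 + 1) (hs1 : 1 ≤ s ^ 2) :
    m21Numerator α k s h < 0 := by
  set A := 9 * α ^ 3 * s ^ 5 * h
  set B := α * k ^ 2 * s * h * (2 * s ^ 4 + 17 * s ^ 2 + 15)
  set C := 3 * α ^ 2 * k * s ^ 2 * (s ^ 4 + 6 * s ^ 2 + 4)
  have hdisc : 4 * A * B - C ^ 2
      = 9 * α ^ 4 * k ^ 2 * s ^ 4 * (7 * s ^ 8 + 64 * s ^ 6 + 84 * s ^ 4 + 12 * s ^ 2 - 16) := by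
    linear_combination 36 * α ^ 4 * k ^ 2 * s ^ 6 * (2 * s ^ 4 + 17 * s ^ 2 + 15) * hpy
  have hpoly : 0 ≤ 7 * s ^ 8 + 64 * s ^ 6 + 84 * s ^ 4 + 12 * s ^ 2 - 16 := by
    nlinarith [one_le_pow₀ hs1 (n := 2), one_le_pow₀ hs1 (n := 3), one_le_pow₀ hs1 (n := 4)]
  -- AM-GM: `C ≤ 2√(AB) ≤ A + B`
  have hC : C ≤ A + B := by
    refine le_of_pow_le_pow_left₀ two_ne_zero (by positivity) ?_
    nlinarith [sq_nonneg (A - B), mul_nonneg (by positivity : 0 ≤ 9 * α ^ 4 * k ^ 2 * s ^ 4) hpoly]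
  have hsplit : m21Numerator α k s h = C - A - B - 2 * k ^ 3 * (2 * s ^ 2 + 3) := by
    unfold m21Numerator; ring
  rw [hsplit]
  nlinarith [pow_pos hk 3]

lemma m21Numerator_neg {α k s h : ℝ} (hα0 : 0 < α) (hα1 : α < 1) (hk : 0 < k) (hs : 0 < s)
    (hh : 0 < h) (hsk : s ≤ k * h) (hpy : h ^ 2 = s ^ 2 + 1) : m21Numerator α k s h < 0 := by
  rcases le_total (s ^ 2) 1 with hs1 | hs1
  · exact m21Numerator_neg_of_sq_le_one hα0 hα1 hk hs hh hsk hs1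
  · exact m21Numerator_neg_of_one_le_sq hα0 hk hs hh hpy hs1

lemma disp_two_mul_of_disp_eq_zero {α β k : ℝ} (hroot : disp α β k = 0) :
    disp α β (2 * k) = 2 * (k * (2 * sinh k ^ 2 + 3) - 3 * α * sinh k * cosh k) := by
  unfold disp at *
  rw [sinh_two_mul, cosh_two_mul]
  linear_combination 8 * cosh k * hroot + 6 * k * cosh_sq k

lemma m21_eq_in_sinh_cosh (α β k c : ℝ) :
    -(9 * α * β + 16) * k + 12 * α * β * k * cosh (2 * k) - 3 * α * β * k * cosh (4 * k)
        + 8 * α * (2 * c - 1) * sinh (2 * k) + 4 * α * (c + 2) * sinh (4 * k)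
      = -24 * α * β * k * sinh k ^ 4 - 16 * k + 32 * α * sinh k * cosh k * (sinh k ^ 2 - 1)
        + 16 * α * sinh k * cosh k * (c + 1) * (2 * sinh k ^ 2 + 3) := by
  have h4 : 4 * k = 2 * (2 * k) := by ring
  rw [h4, cosh_two_mul (2 * k), sinh_two_mul (2 * k), cosh_two_mul, sinh_two_mul]
  linear_combination (-3 * α * β * k * (cosh k ^ 2 + 7 * sinh k ^ 2 - 3)
    + 16 * α * sinh k * cosh k * (c + 2)) * cosh_sq k

lemma mul_m21_eq_m21Numerator {α β k c s h : ℝ} (hpy : h ^ 2 = s ^ 2 + 1)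
    (hb : β * k ^ 2 * s = k * h - α * s)
    (hc : (c + 1) * (k * (2 * s ^ 2 + 3) - 3 * α * s * h) = -(k * (2 * s ^ 2 + 3)) / 2) :
    k * (k * (2 * s ^ 2 + 3) - 3 * α * s * h) * (-24 * α * β * k * s ^ 4 - 16 * k
        + 32 * α * s * h * (s ^ 2 - 1) + 16 * α * s * h * (c + 1) * (2 * s ^ 2 + 3))
      = 8 * m21Numerator α k s h := by
  unfold m21Numerator
  linear_combination (-24 * α * s ^ 3 * (k * (2 * s ^ 2 + 3) - 3 * α * s * h)) * hb
    + 16 * α * k * s * h * (2 * s ^ 2 + 3) * hc - 24 * α ^ 2 * k * s ^ 2 * (s ^ 2 - 4) * hpy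

theorem stmt_11_general (α β kstar : ℝ) (hα0 : 0 < α) (hα1 : α < 1)
    (hk : 0 < kstar) (hroot : disp α β kstar = 0)
    (c m : ℝ)
    (hc : c = -1 - kstar * (Real.cosh (2 * kstar) + 2) / disp α β (2 * kstar))
    (hm : m = -(9 * α * β + 16) * kstar + 12 * α * β * kstar * Real.cosh (2 * kstar)
        - 3 * α * β * kstar * Real.cosh (4 * kstar)
        + 8 * α * (2 * c - 1) * Real.sinh (2 * kstar)
        + 4 * α * (c + 2) * Real.sinh (4 * kstar)) :
    disp α β (2 * kstar) ≠ 0 ∧ m < 0 := by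
  set s := sinh kstar
  set h := cosh kstar
  have hs : 0 < s := sinh_pos_iff.2 hk
  have hh : 0 < h := cosh_pos kstar
  set E := kstar * (2 * s ^ 2 + 3) - 3 * α * s * h
  have hD : disp α β (2 * kstar) = 2 * E := disp_two_mul_of_disp_eq_zero hroot
  have hEpos : 0 < E := by
    have h3 : 3 * s * h ≤ kstar * (2 * s ^ 2 + 3) := three_mul_sinh_mul_cosh_le hk.le
    nlinarith [mul_pos hs hh]
  refine ⟨by rw [hD]; positivity, ?_⟩
  have hb : β * kstar ^ 2 * s = kstar * h - α * s := by
    unfold disp at hroot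
    linear_combination hroot
  have hcE : (c + 1) * E = -(kstar * (2 * s ^ 2 + 3)) / 2 := by
    rw [hc, hD, cosh_two_mul, cosh_sq]
    field_simp
    ring
  have hmE := mul_m21_eq_m21Numerator (cosh_sq kstar) hb hcE
  rw [← m21_eq_in_sinh_cosh, ← hm] at hmE
  have hN := m21Numerator_neg hα0 hα1 hk hs hh (sinh_le_mul_cosh hk.le) (cosh_sq kstar)
  exact neg_of_mul_neg_right (by linarith) (mul_pos hk hEpos).le

/-- In Region I, with `k⋆` the unique positive root of the dispersion relation, the
coefficient `m̃₂₁⁽²⁾` is well defined (`𝒟(2k⋆) ≠ 0`) and strictly negative. -/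
theorem stmt_11 (α β kstar : ℝ) (hα0 : 0 < α) (hα1 : α < 1) (hβ : 0 < β)
    (hk : 0 < kstar) (hroot : disp α β kstar = 0)
    (huniq : ∀ k : ℝ, 0 < k → disp α β k = 0 → k = kstar)
    (c m : ℝ)
    (hc : c = -1 - kstar * (Real.cosh (2 * kstar) + 2) / disp α β (2 * kstar))
    (hm : m = -(9 * α * β + 16) * kstar + 12 * α * β * kstar * Real.cosh (2 * kstar)
        - 3 * α * β * kstar * Real.cosh (4 * kstar)
        + 8 * α * (2 * c - 1) * Real.sinh (2 * kstar)
        + 4 * α * (c + 2) * Real.sinh (4 * kstar)) :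
    disp α β (2 * kstar) ≠ 0 ∧ m < 0 :=
  stmt_11_general α β kstar hα0 hα1 hk hroot c m hc hm
end

section
/- Let α ∈ (0,1), β > 0, and let k⋆ > 0 be the unique positive root of 𝒟(k) = (α + βk²)·sinh(k) − k·cosh(k). Then the coefficient c(k⋆) = −1 − k⋆·(cosh(2k⋆) + 2)/𝒟(2k⋆) is well defined and satisfies c(k⋆) < −1. -/
open Filter Real

theorem pos_of_eventually_pos_of_forall_ne_zero {f : ℝ → ℝ} {a : ℝ} (hf : Continuous f)
    (hpos : ∀ᶠ x in atTop, 0 < f x) (hne : ∀ x, a ≤ x → f x ≠ 0) : 0 < f a := by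
  obtain ⟨K, hfK, haK⟩ := (hpos.and (eventually_ge_atTop a)).exists
  by_contra! hfa
  obtain ⟨c, hc, hfc⟩ :=
    intermediate_value_Icc haK hf.continuousOn ⟨hfa, hfK.le⟩
  exact hne c hc.1 hfc

theorem Real.cosh_lt_two_mul_sinh {x : ℝ} (hx : 1 ≤ x) : cosh x < 2 * sinh x := by
  have hexp : exp (-x) < sinh x := calc
    exp (-x) < 1 := exp_lt_one_iff.mpr (by linarith)
    _ ≤ x := hx
    _ ≤ sinh x := self_le_sinh_iff.mpr (by linarith)
  linarith [cosh_sub_sinh x]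

theorem continuous_disp (α β : ℝ) : Continuous (disp α β) := by
  unfold disp
  fun_prop

theorem eventually_disp_pos {α β : ℝ} (hα : 0 ≤ α) (hβ : 0 < β) :
    ∀ᶠ k in atTop, 0 < disp α β k := by
  filter_upwards [eventually_ge_atTop 1, eventually_ge_atTop (2 / β)] with k hk1 hkβ
  have hsinh : 0 < sinh k := sinh_pos_iff.mpr (by linarith)
  have hquad : 2 * k ≤ β * k ^ 2 := by
    have : 2 ≤ β * k := (div_le_iff₀' hβ).mp hkβ
    nlinarith
  have hcosh := cosh_lt_two_mul_sinh hk1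
  unfold disp
  nlinarith

theorem stmt_13_general (α β kstar : ℝ) (hα0 : 0 < α) (hβ : 0 < β)
    (hk : 0 < kstar)
    (huniq : ∀ k : ℝ, 0 < k → disp α β k = 0 → k = kstar) :
    disp α β (2 * kstar) ≠ 0 ∧
      -1 - kstar * (Real.cosh (2 * kstar) + 2) / disp α β (2 * kstar) < -1 := by
  have hno_root : ∀ k, 2 * kstar ≤ k → disp α β k ≠ 0 := fun k hk2 h0 => by
    linarith [huniq k (by linarith) h0]
  have hDpos : 0 < disp α β (2 * kstar) :=
    pos_of_eventually_pos_of_forall_ne_zero (continuous_disp α β)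
      (eventually_disp_pos hα0.le hβ) hno_root
  refine ⟨hDpos.ne', ?_⟩
  have : 0 < kstar * (Real.cosh (2 * kstar) + 2) / disp α β (2 * kstar) := by positivity
  linarith

/-- In Region I, with `k⋆` the unique positive root, the coefficient
`c(k⋆) = −1 − k⋆(cosh(2k⋆) + 2)/𝒟(2k⋆)` is well defined and satisfies `c(k⋆) < −1`. -/
theorem stmt_13 (α β kstar : ℝ) (hα0 : 0 < α) (hα1 : α < 1) (hβ : 0 < β)
    (hk : 0 < kstar) (hroot : disp α β kstar = 0)
    (huniq : ∀ k : ℝ, 0 < k → disp α β k = 0 → k = kstar) :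
    disp α β (2 * kstar) ≠ 0 ∧
      -1 - kstar * (Real.cosh (2 * kstar) + 2) / disp α β (2 * kstar) < -1 :=
  stmt_13_general α β kstar hα0 hβ hk huniq
end
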